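/- arXiv:1801.04965 — 2 statements merged into one kernel-verified Lean document; each statement's English description precedes it below -/
import Mathlib

section
/- Let u and v be nonadjacent vertices of a graph G and let G_{u,v,1} be obtained by adding a new vertex x adjacent exactly to u and v. Then γ(G_{u,v,1}) = γ(G) + 1 if and only if both u and v lie in no minimum dominating set of G, γ((G−v) − u) ≥ γ(G−v), and γ((G−u) − v) ≥ γ(G−u). -/
/-- `D` is a dominating set of `G`: every vertex not in `D` has a neighbor in `D`. -/
def isDomSet {V : Type*} (G : SimpleGraph V) (D : Finset V) : Prop :=
  ∀ v, v ∉ D → ∃ u ∈ D, G.Adj u v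

/-- The domination number: minimum cardinality of a dominating set. -/
noncomputable def domNum {V : Type*} (G : SimpleGraph V) : ℕ :=
  sInf {n | ∃ D : Finset V, D.card = n ∧ isDomSet G D}

/-- The `(u,v)`-path-addition graph `G_{u,v,k}`: add an internally disjoint path with
`k` internal vertices between `u` and `v`. -/
noncomputable def pathAdd {V : Type*} (G : SimpleGraph V) (u v : V) (k : ℕ) :
    SimpleGraph (V ⊕ Fin k) :=
  SimpleGraph.fromRel (fun a b =>
    match a, b with
    | Sum.inl x, Sum.inl y => G.Adj x y
    | Sum.inl x, Sum.inr i => (x = u ∧ (i : ℕ) = 0) ∨ (x = v ∧ (i : ℕ) = k - 1)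
    | Sum.inr _, Sum.inl _ => False
    | Sum.inr i, Sum.inr j => (j : ℕ) = (i : ℕ) + 1)

section helpers
variable {V : Type*}

lemma domNum_le (G : SimpleGraph V) {D : Finset V} (hD : isDomSet G D) : domNum G ≤ D.card :=
  Nat.sInf_le ⟨D, rfl, hD⟩

lemma domNum_spec [Fintype V] (G : SimpleGraph V) :
    ∃ D : Finset V, D.card = domNum G ∧ isDomSet G D :=
  Nat.sInf_mem (s := {n | ∃ D : Finset V, D.card = n ∧ isDomSet G D})
    ⟨Finset.univ.card, Finset.univ, rfl, fun w hw => absurd (Finset.mem_univ w) hw⟩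

lemma pa_ll (G : SimpleGraph V) (u v : V) {a b : V} :
    (pathAdd G u v 1).Adj (Sum.inl a) (Sum.inl b) ↔ G.Adj a b := by
  simp only [pathAdd, SimpleGraph.fromRel_adj]
  constructor
  · rintro ⟨hne, h | h⟩
    · exact h
    · exact h.symm
  · exact fun hadj => ⟨by simpa using hadj.ne, Or.inl hadj⟩

lemma pa_lr (G : SimpleGraph V) (u v : V) {y : V} {i : Fin 1} :
    (pathAdd G u v 1).Adj (Sum.inl y) (Sum.inr i) ↔ y = u ∨ y = v := by
  have : (i : ℕ) = 0 := by omega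
  simp [pathAdd, SimpleGraph.fromRel_adj, this]

lemma pa_rr (G : SimpleGraph V) (u v : V) {i j : Fin 1} :
    ¬ (pathAdd G u v 1).Adj (Sum.inr i) (Sum.inr j) := by
  have : i = j := Subsingleton.elim i j
  subst this
  exact (pathAdd G u v 1).irrefl

lemma induce_le (G : SimpleGraph V) (s : Set V) (D : Finset V) (hDs : ∀ y ∈ D, y ∈ s)
    (hdom : ∀ w ∈ s, w ∉ D → ∃ d ∈ D, G.Adj d w) : domNum (G.induce s) ≤ D.card := by
  classical
  set D' : Finset s := D.subtype (· ∈ s) with hD'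
  have hcard : D'.card = D.card := by
    calc D'.card = (D'.map (Function.Embedding.subtype _)).card := (Finset.card_map _).symm
    _ = (D.filter (· ∈ s)).card := by rw [hD', Finset.subtype_map]
    _ = D.card := by rw [Finset.filter_true_of_mem hDs]
  refine le_trans (domNum_le _ ?_) hcard.le
  intro a ha
  have haD : (a : V) ∉ D := by simpa [hD', Finset.mem_subtype] using ha
  obtain ⟨d, hd, hadj⟩ := hdom a a.2 haD
  exact ⟨⟨d, hDs d hd⟩, by simp [hD', Finset.mem_subtype, hd], hadj⟩

lemma induce_min [Fintype V] (G : SimpleGraph V) (s : Set V) :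
    ∃ D : Finset V, (∀ y ∈ D, y ∈ s) ∧ D.card = domNum (G.induce s) ∧
      ∀ w ∈ s, w ∉ D → ∃ d ∈ D, G.Adj d w := by
  classical
  haveI : Fintype ↥s := Set.Finite.fintype (Set.toFinite s)
  obtain ⟨D', hcard, hdom⟩ := domNum_spec (G.induce s)
  refine ⟨D'.map (Function.Embedding.subtype _), ?_, ?_, ?_⟩
  · intro y hy
    obtain ⟨a, _, rfl⟩ := Finset.mem_map.mp hy
    exact a.2
  · rw [Finset.card_map]; exact hcard
  · intro w hw hwD
    have : (⟨w, hw⟩ : s) ∉ D' := fun hc => hwD (Finset.mem_map_of_mem _ hc)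
    obtain ⟨d, hd, hadj⟩ := hdom _ this
    exact ⟨d, Finset.mem_map_of_mem _ hd, hadj⟩

lemma no_small (G : SimpleGraph V) (z : V) (E : Finset V) (hzE : z ∉ E)
    (hdom : ∀ w, w ≠ z → w ∉ E → ∃ d ∈ E, G.Adj d w)
    (hcard : E.card + 1 ≤ domNum G)
    (hbad : ∀ D : Finset V, isDomSet G D → D.card = domNum G → z ∉ D) : False := by
  classical
  have hdomset : isDomSet G (insert z E) := by
    intro w hw
    rcases eq_or_ne w z with rfl | hwz
    · exact absurd (Finset.mem_insert_self _ _) hw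
    · obtain ⟨d, hd, hadj⟩ := hdom w hwz (fun hc => hw (Finset.mem_insert_of_mem hc))
      exact ⟨d, Finset.mem_insert_of_mem hd, hadj⟩
  have h1 : (insert z E).card = E.card + 1 := Finset.card_insert_of_notMem hzE
  have h2 : domNum G ≤ E.card + 1 := h1 ▸ domNum_le G hdomset
  have h3 : (insert z E).card = domNum G := by omega
  exact hbad _ hdomset h3 (Finset.mem_insert_self _ _)

end helpers

theorem stmt14 {V : Type*} [Fintype V] (G : SimpleGraph V) (u v : V)
    (hne : u ≠ v) (h : ¬G.Adj u v) :
    domNum (pathAdd G u v 1) = domNum G + 1 ↔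
      ((∀ D : Finset V, isDomSet G D → D.card = domNum G → u ∉ D ∧ v ∉ D) ∧
        domNum (G.induce {w | w ≠ v}) ≤ domNum (G.induce {w | w ≠ u ∧ w ≠ v}) ∧
        domNum (G.induce {w | w ≠ u}) ≤ domNum (G.induce {w | w ≠ u ∧ w ≠ v})) := by
  classical
  set x : V ⊕ Fin 1 := Sum.inr 0 with hxdef
  -- Fact A: γ(G') ≤ γ(G) + 1
  have factA : domNum (pathAdd G u v 1) ≤ domNum G + 1 := by
    obtain ⟨D, hcard, hdom⟩ := domNum_spec G
    have hds : isDomSet (pathAdd G u v 1) (insert x (D.map Function.Embedding.inl)) := by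
      intro a ha'
      rcases a with w | i
      · have hwD : w ∉ D := fun hc =>
          ha' (Finset.mem_insert_of_mem (Finset.mem_map_of_mem _ hc))
        obtain ⟨d, hd, hadj⟩ := hdom w hwD
        exact ⟨Sum.inl d, Finset.mem_insert_of_mem (Finset.mem_map_of_mem _ hd),
          (pa_ll G u v).mpr hadj⟩
      · obtain rfl : i = 0 := Subsingleton.elim i 0
        exact absurd (Finset.mem_insert_self x _) ha'
    have h1 := domNum_le _ hds
    have h2 := Finset.card_insert_le x (D.map (Function.Embedding.inl (β := Fin 1)))
    rw [Finset.card_map, hcard] at h2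
    omega
  constructor
  · -- forward direction
    intro heq
    have ha : ∀ D : Finset V, isDomSet G D → D.card = domNum G → u ∉ D ∧ v ∉ D := by
      intro D hdom hcard
      have key : ∀ y ∈ D, y = u ∨ y = v → False := by
        intro y hyD hy
        have hds : isDomSet (pathAdd G u v 1) (D.map Function.Embedding.inl) := by
          intro a ha'
          rcases a with w | i
          · have hwD : w ∉ D := fun hc => ha' (Finset.mem_map_of_mem _ hc)
            obtain ⟨d, hd, hadj⟩ := hdom w hwD
            exact ⟨Sum.inl d, Finset.mem_map_of_mem _ hd, (pa_ll G u v).mpr hadj⟩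
          · exact ⟨Sum.inl y, Finset.mem_map_of_mem _ hyD, (pa_lr G u v).mpr hy⟩
        have hle := domNum_le _ hds
        rw [Finset.card_map, hcard] at hle
        omega
      exact ⟨fun hu => key u hu (Or.inl rfl), fun hv => key v hv (Or.inr rfl)⟩
    have h2 : domNum G ≤ domNum (G.induce {w | w ≠ u ∧ w ≠ v}) := by
      obtain ⟨F, hFs, hFcard, hFdom⟩ := induce_min G {w | w ≠ u ∧ w ≠ v}
      have hds : isDomSet (pathAdd G u v 1) (insert x (F.map Function.Embedding.inl)) := by
        intro a ha'
        rcases a with w | i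
        · have hwF : w ∉ F := fun hc =>
            ha' (Finset.mem_insert_of_mem (Finset.mem_map_of_mem _ hc))
          by_cases hw : w = u ∨ w = v
          · exact ⟨x, Finset.mem_insert_self _ _, ((pa_lr G u v).mpr hw).symm⟩
          · push_neg at hw
            obtain ⟨d, hd, hadj⟩ := hFdom w hw hwF
            exact ⟨Sum.inl d, Finset.mem_insert_of_mem (Finset.mem_map_of_mem _ hd),
              (pa_ll G u v).mpr hadj⟩
        · obtain rfl : i = 0 := Subsingleton.elim i 0
          exact absurd (Finset.mem_insert_self x _) ha'
      have hle := domNum_le _ hds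
      have hc := Finset.card_insert_le x (F.map (Function.Embedding.inl (β := Fin 1)))
      rw [Finset.card_map, hFcard] at hc
      omega
    obtain ⟨D, hDcard, hDdom⟩ := domNum_spec G
    obtain ⟨hu, hv⟩ := ha D hDdom hDcard
    have h1v : domNum (G.induce {w | w ≠ v}) ≤ domNum G := by
      have := induce_le G {w | w ≠ v} D (fun y hy hyv => hv (hyv ▸ hy))
        (fun w _ hwD => hDdom w hwD)
      omega
    have h1u : domNum (G.induce {w | w ≠ u}) ≤ domNum G := by
      have := induce_le G {w | w ≠ u} D (fun y hy hyu => hu (hyu ▸ hy))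
        (fun w _ hwD => hDdom w hwD)
      omega
    exact ⟨ha, h1v.trans h2, h1u.trans h2⟩
  · -- backward direction
    rintro ⟨ha, hb, hc⟩
    refine le_antisymm factA ?_
    by_contra hlt
    push_neg at hlt
    have hle : domNum (pathAdd G u v 1) ≤ domNum G := by omega
    obtain ⟨D', hcard', hdom'⟩ := domNum_spec (pathAdd G u v 1)
    by_cases hxD : x ∈ D'
    · -- x ∈ D'
      set D : Finset V := (D'.erase x).preimage Sum.inl Sum.inl_injective.injOn with hDdef
      have hmem : ∀ w : V, w ∈ D ↔ Sum.inl w ∈ D' := by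
        intro w
        rw [hDdef, Finset.mem_preimage, Finset.mem_erase]
        constructor
        · exact fun hh => hh.2
        · exact fun hh => ⟨by simp [hxdef], hh⟩
      have hDlt : D.card < D'.card := by
        refine lt_of_le_of_lt ?_ (Finset.card_erase_lt_of_mem hxD)
        exact Finset.card_le_card_of_injOn Sum.inl
          (fun a ha' => Finset.mem_preimage.mp ha') Sum.inl_injective.injOn
      have hcov : ∀ w, w ≠ u → w ≠ v → w ∉ D → ∃ d ∈ D, G.Adj d w := by
        intro w hwu hwv hwD
        have hnot : Sum.inl w ∉ D' := fun hc => hwD ((hmem w).mpr hc)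
        obtain ⟨d, hd, hadj⟩ := hdom' _ hnot
        rcases d with d' | i
        · exact ⟨d', (hmem d').mpr hd, (pa_ll G u v).mp hadj⟩
        · obtain rfl : i = 0 := Subsingleton.elim i 0
          rcases (pa_lr G u v).mp hadj.symm with rfl | rfl
          · exact absurd rfl hwu
          · exact absurd rfl hwv
      by_cases hPu : u ∈ D ∨ ∃ d ∈ D, G.Adj d u
      · by_cases hPv : v ∈ D ∨ ∃ d ∈ D, G.Adj d v
        · -- D dominates G, too small
          have hds : isDomSet G D := by
            intro w hw
            by_cases hwu : w = u
            · subst hwu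
              rcases hPu with hh | hh
              · exact absurd hh hw
              · exact hh
            · by_cases hwv : w = v
              · subst hwv
                rcases hPv with hh | hh
                · exact absurd hh hw
                · exact hh
              · exact hcov w hwu hwv hw
          have := domNum_le G hds
          omega
        · push_neg at hPv
          refine no_small G v D hPv.1 ?_ (by omega) (fun E h1 h2 => (ha E h1 h2).2)
          intro w hwv hwD
          by_cases hwu : w = u
          · subst hwu
            rcases hPu with hh | hh
            · exact absurd hh hwD
            · exact hh
          · exact hcov w hwu hwv hwD
      · by_cases hPv : v ∈ D ∨ ∃ d ∈ D, G.Adj d v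
        · push_neg at hPu
          refine no_small G u D hPu.1 ?_ (by omega) (fun E h1 h2 => (ha E h1 h2).1)
          intro w hwu hwD
          by_cases hwv : w = v
          · subst hwv
            rcases hPv with hh | hh
            · exact absurd hh hwD
            · exact hh
          · exact hcov w hwu hwv hwD
        · push_neg at hPu; push_neg at hPv
          have hsub : ∀ y ∈ D, y ∈ {w | w ≠ u ∧ w ≠ v} :=
            fun y hy => ⟨fun e => hPu.1 (e ▸ hy), fun e => hPv.1 (e ▸ hy)⟩
          have hm : domNum (G.induce {w | w ≠ u ∧ w ≠ v}) ≤ D.card :=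
            induce_le G _ D hsub (fun w hw hwD => hcov w hw.1 hw.2 hwD)
          obtain ⟨E, hEs, hEcard, hEdom⟩ := induce_min G {w | w ≠ v}
          refine no_small G v E (fun hcE => (hEs v hcE) rfl) ?_ (by omega)
            (fun F h1 h2 => (ha F h1 h2).2)
          exact fun w hwv hwE => hEdom w hwv hwE
    · -- x ∉ D'
      set D : Finset V := D'.preimage Sum.inl Sum.inl_injective.injOn with hDdef
      have hmem : ∀ w : V, w ∈ D ↔ Sum.inl w ∈ D' := fun w => Finset.mem_preimage
      have hDle : D.card ≤ D'.card :=
        Finset.card_le_card_of_injOn Sum.inl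
          (fun a ha' => (hmem a).mp ha') Sum.inl_injective.injOn
      have hDdom : isDomSet G D := by
        intro w hw
        have hnot : Sum.inl w ∉ D' := fun hcc => hw ((hmem w).mpr hcc)
        obtain ⟨d, hd, hadj⟩ := hdom' _ hnot
        rcases d with d' | i
        · exact ⟨d', (hmem d').mpr hd, (pa_ll G u v).mp hadj⟩
        · obtain rfl : i = 0 := Subsingleton.elim i 0
          exact absurd hd hxD
      have hγ : domNum G ≤ D.card := domNum_le G hDdom
      obtain ⟨huD, hvD⟩ := ha D hDdom (by omega)
      obtain ⟨d, hd, hadj⟩ := hdom' x hxD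
      rcases d with y | j
      · rcases (pa_lr G u v).mp hadj with rfl | rfl
        · exact huD ((hmem _).mpr hd)
        · exact hvD ((hmem _).mpr hd)
      · exact pa_rr G u v hadj
end

section
/- Let u and v be nonadjacent vertices of a graph G and let G_{u,v,3} be obtained by adding a path u, x_1, x_2, x_3, v with three new internal vertices. Then γ(G) ≤ γ(G_{u,v,3}) ≤ γ(G) + 1, and γ(G_{u,v,3}) = γ(G) if and only if either (γ(G−u) < γ(G) and v lies in some minimum dominating set of G−u) or (γ(G−v) < γ(G) and u lies in some minimum dominating set of G−v). -/
section Aux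
open Finset
variable {V : Type*} (G : SimpleGraph V) (u v : V)

lemma adj_ll (a b : V) : (pathAdd G u v 3).Adj (Sum.inl a) (Sum.inl b) ↔ G.Adj a b := by
  constructor
  · rintro ⟨_, h | h⟩; exact h; exact h.symm
  · intro hh; exact ⟨by simpa using hh.ne, Or.inl hh⟩

lemma adj_lr (a : V) (i : Fin 3) :
    (pathAdd G u v 3).Adj (Sum.inl a) (Sum.inr i) ↔ ((a = u ∧ (i : ℕ) = 0) ∨ (a = v ∧ (i : ℕ) = 2)) := by
  simp [pathAdd, SimpleGraph.fromRel_adj]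

lemma adj_rl (a : V) (i : Fin 3) :
    (pathAdd G u v 3).Adj (Sum.inr i) (Sum.inl a) ↔ ((a = u ∧ (i : ℕ) = 0) ∨ (a = v ∧ (i : ℕ) = 2)) := by
  rw [SimpleGraph.adj_comm]; exact adj_lr G u v a i

lemma adj_rr (i j : Fin 3) :
    (pathAdd G u v 3).Adj (Sum.inr i) (Sum.inr j) ↔ i ≠ j ∧ ((j:ℕ) = (i:ℕ) + 1 ∨ (i:ℕ) = (j:ℕ) + 1) := by
  simp [pathAdd, SimpleGraph.fromRel_adj]

lemma induce_adj' (s : Set V) (a b : ↥s) : (G.induce s).Adj a b ↔ G.Adj a.val b.val := by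
  simp [SimpleGraph.comap_adj]

lemma exists_min_domset {V : Type*} [Fintype V] (G : SimpleGraph V) :
    ∃ D : Finset V, D.card = domNum G ∧ isDomSet G D := by
  have h : domNum G ∈ {n | ∃ D : Finset V, D.card = n ∧ isDomSet G D} :=
    Nat.sInf_mem ⟨Finset.univ.card, Finset.univ, rfl, fun w hw => absurd (Finset.mem_univ w) hw⟩
  obtain ⟨D, h1, h2⟩ := h
  exact ⟨D, h1, h2⟩

lemma domNum_le_card {V : Type*} (G : SimpleGraph V) {D : Finset V} (hD : isDomSet G D) :
    domNum G ≤ D.card := Nat.sInf_le ⟨D, rfl, hD⟩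

lemma Ldom {E : Finset (V ⊕ Fin 3)} (hE : isDomSet (pathAdd G u v 3) E) :
    ∀ w : V, Sum.inl w ∉ E →
      (∃ y, Sum.inl y ∈ E ∧ G.Adj y w) ∨ (w = u ∧ Sum.inr 0 ∈ E) ∨ (w = v ∧ Sum.inr 2 ∈ E) := by
  intro w hw
  obtain ⟨y, hy, hadj⟩ := hE _ hw
  match y with
  | Sum.inl a => exact Or.inl ⟨a, hy, (adj_ll G u v a w).mp hadj⟩
  | Sum.inr i =>
    rcases (adj_rl G u v w i).mp hadj with ⟨rfl, hi⟩ | ⟨rfl, hi⟩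
    · have h0 : i = 0 := Fin.ext (by simp [hi])
      subst h0; exact Or.inr (Or.inl ⟨rfl, hy⟩)
    · have h2 : i = 2 := Fin.ext (by simp [hi])
      subst h2; exact Or.inr (Or.inr ⟨rfl, hy⟩)

lemma STbound {V : Type*} [Fintype V] [DecidableEq V] (G : SimpleGraph V) (u v : V) (hne : u ≠ v)
    (E : Finset (V ⊕ Fin 3)) (hE : isDomSet (pathAdd G u v 3) E) :
    domNum G ≤ (E.erase (Sum.inr 1)).card := by
  classical
  set S : Finset V := Finset.univ.filter (fun w => Sum.inl w ∈ E) with hS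
  set T : Finset V := (if Sum.inr 0 ∈ E then {u} else (∅ : Finset V)) ∪
      (if Sum.inr 2 ∈ E then {v} else (∅ : Finset V)) with hT
  have hmemS : ∀ w : V, w ∈ S ↔ Sum.inl w ∈ E := by intro w; simp [hS]
  have hmemT : ∀ w : V, w ∈ T ↔ ((w = u ∧ Sum.inr 0 ∈ E) ∨ (w = v ∧ Sum.inr 2 ∈ E)) := by
    intro w
    constructor
    · intro hw
      rcases Finset.mem_union.mp hw with hw | hw
      · split at hw
        · exact Or.inl ⟨Finset.mem_singleton.mp hw, ‹_›⟩
        · simp at hw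
      · split at hw
        · exact Or.inr ⟨Finset.mem_singleton.mp hw, ‹_›⟩
        · simp at hw
    · rintro (⟨rfl, h0⟩ | ⟨rfl, h2⟩)
      · exact Finset.mem_union_left _ (by simp [h0])
      · exact Finset.mem_union_right _ (by simp [h2])
  have hdom : isDomSet G (S ∪ T) := by
    intro w hw
    have hwS : w ∉ S := fun hh => hw (Finset.mem_union_left _ hh)
    have hwE : Sum.inl w ∉ E := fun hh => hwS ((hmemS w).mpr hh)
    rcases Ldom G u v hE w hwE with ⟨y, hy, hadj⟩ | hcase | hcase
    · exact ⟨y, Finset.mem_union_left _ ((hmemS y).mpr hy), hadj⟩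
    · exact absurd (Finset.mem_union_right _ ((hmemT w).mpr (Or.inl hcase))) hw
    · exact absurd (Finset.mem_union_right _ ((hmemT w).mpr (Or.inr hcase))) hw
  refine le_trans (domNum_le_card G hdom) (Finset.card_le_card_of_injOn
    (fun w => if Sum.inl w ∈ E then Sum.inl w else if w = u then (Sum.inr 0 : V ⊕ Fin 3) else Sum.inr 2) ?_ ?_)
  · intro w hw
    beta_reduce
    by_cases hwE : Sum.inl w ∈ E
    · rw [if_pos hwE]
      exact Finset.mem_erase.mpr ⟨by simp, hwE⟩
    · have hwT : w ∈ T := by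
        rcases Finset.mem_union.mp hw with hh | hh
        · exact absurd ((hmemS w).mp hh) hwE
        · exact hh
      rcases (hmemT w).mp hwT with ⟨rfl, h0⟩ | ⟨rfl, h2⟩
      · rw [if_neg hwE, if_pos rfl]
        exact Finset.mem_erase.mpr ⟨by simp, h0⟩
      · rw [if_neg hwE, if_neg (fun hh => hne hh.symm)]
        exact Finset.mem_erase.mpr ⟨by simp, h2⟩
  · intro a ha b hb hab
    have haT : Sum.inl a ∉ E → a = u ∨ a = v := by
      intro haE
      rcases Finset.mem_union.mp ha with hh | hh
      · exact absurd ((hmemS a).mp hh) haE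
      · rcases (hmemT a).mp hh with ⟨h1,_⟩|⟨h1,_⟩; exacts [Or.inl h1, Or.inr h1]
    have hbT : Sum.inl b ∉ E → b = u ∨ b = v := by
      intro hbE
      rcases Finset.mem_union.mp hb with hh | hh
      · exact absurd ((hmemS b).mp hh) hbE
      · rcases (hmemT b).mp hh with ⟨h1,_⟩|⟨h1,_⟩; exacts [Or.inl h1, Or.inr h1]
    simp only at hab
    by_cases haE : Sum.inl a ∈ E <;> by_cases hbE : Sum.inl b ∈ E
    · rw [if_pos haE, if_pos hbE] at hab; exact Sum.inl.inj hab
    · rw [if_pos haE, if_neg hbE] at hab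
      by_cases hbu : b = u
      · rw [if_pos hbu] at hab; exact absurd hab (by simp)
      · rw [if_neg hbu] at hab; exact absurd hab (by simp)
    · rw [if_neg haE, if_pos hbE] at hab
      by_cases hau : a = u
      · rw [if_pos hau] at hab; exact absurd hab (by simp)
      · rw [if_neg hau] at hab; exact absurd hab (by simp)
    · rw [if_neg haE, if_neg hbE] at hab
      by_cases hau : a = u <;> by_cases hbu : b = u
      · rw [hau, hbu]
      · rw [if_pos hau, if_neg hbu] at hab; simp at hab
      · rw [if_neg hau, if_pos hbu] at hab; simp at hab
      · rcases haT haE with h1 | h1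
        · exact absurd h1 hau
        · rcases hbT hbE with h2 | h2
          · exact absurd h2 hbu
          · rw [h1, h2]

lemma domNum_le_del {V : Type*} [Fintype V] (G : SimpleGraph V) (u : V) :
    domNum G ≤ domNum (G.induce {w | w ≠ u}) + 1 := by
  classical
  haveI : Fintype ↥{w : V | w ≠ u} := Fintype.ofFinite _
  obtain ⟨D, hc, hd⟩ := exists_min_domset (G.induce {w | w ≠ u})
  have hdom : isDomSet G (D.image (fun a => a.val) ∪ {u}) := by
    intro w hw
    have hwu : w ≠ u := fun hh => hw (Finset.mem_union_right _ (by simp [hh]))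
    have hwD : (⟨w, hwu⟩ : ↥{w : V | w ≠ u}) ∉ D := by
      intro hh
      exact hw (Finset.mem_union_left _ (Finset.mem_image.mpr ⟨_, hh, rfl⟩))
    obtain ⟨y, hy, hadj⟩ := hd _ hwD
    exact ⟨y.val, Finset.mem_union_left _ (Finset.mem_image.mpr ⟨y, hy, rfl⟩),
      (induce_adj' G _ _ _).mp hadj⟩
  calc domNum G ≤ _ := domNum_le_card G hdom
    _ ≤ D.card + 1 := le_trans (Finset.card_union_le _ _) (by simpa using Finset.card_image_le)
    _ = _ := by rw [hc]
end Aux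

theorem stmt16 {V : Type*} [Fintype V] (G : SimpleGraph V) (u v : V)
    (hne : u ≠ v) (h : ¬G.Adj u v) :
    domNum G ≤ domNum (pathAdd G u v 3) ∧
    domNum (pathAdd G u v 3) ≤ domNum G + 1 ∧
    (domNum (pathAdd G u v 3) = domNum G ↔
      ((domNum (G.induce {w | w ≠ u}) < domNum G ∧
          ∃ D : Finset {w : V // w ∈ {w | w ≠ u}},
            isDomSet (G.induce {w | w ≠ u}) D ∧
            D.card = domNum (G.induce {w | w ≠ u}) ∧ ⟨v, hne.symm⟩ ∈ D) ∨
        (domNum (G.induce {w | w ≠ v}) < domNum G ∧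
          ∃ D : Finset {w : V // w ∈ {w | w ≠ v}},
            isDomSet (G.induce {w | w ≠ v}) D ∧
            D.card = domNum (G.induce {w | w ≠ v}) ∧ ⟨u, hne⟩ ∈ D))) := by
  classical
  have parta : domNum G ≤ domNum (pathAdd G u v 3) := by
    obtain ⟨D', hc, hd⟩ := exists_min_domset (pathAdd G u v 3)
    calc domNum G ≤ (D'.erase (Sum.inr 1)).card := STbound G u v hne D' hd
      _ ≤ D'.card := Finset.card_erase_le
      _ = _ := hc
  have partb : domNum (pathAdd G u v 3) ≤ domNum G + 1 := by
    obtain ⟨D, hc, hd⟩ := exists_min_domset G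
    have hdom : isDomSet (pathAdd G u v 3) (D.image Sum.inl ∪ {Sum.inr 1}) := by
      intro x hx
      match x with
      | Sum.inl a =>
        have haD : a ∉ D := fun hh => hx (Finset.mem_union_left _ (Finset.mem_image_of_mem _ hh))
        obtain ⟨y, hy, hadj⟩ := hd a haD
        exact ⟨Sum.inl y, Finset.mem_union_left _ (Finset.mem_image_of_mem _ hy),
          (adj_ll G u v y a).mpr hadj⟩
      | Sum.inr i =>
        have hi : i ≠ 1 := fun hh => hx (Finset.mem_union_right _ (by simp [hh]))
        have hiv : (i : ℕ) ≠ 1 := fun hh => hi (Fin.ext hh)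
        have h3 := i.isLt
        refine ⟨Sum.inr 1, Finset.mem_union_right _ (by simp),
          (adj_rr G u v 1 i).mpr ⟨fun hh => hi hh.symm, ?_⟩⟩
        have c1 : ((1 : Fin 3) : ℕ) = 1 := rfl
        rw [c1]; omega
    calc domNum (pathAdd G u v 3) ≤ _ := domNum_le_card _ hdom
      _ ≤ D.card + 1 := le_trans (Finset.card_union_le _ _) (by simpa using Finset.card_image_le)
      _ = _ := by rw [hc]
  refine ⟨parta, partb, ?_, ?_⟩
  · -- forward
    intro heq
    obtain ⟨D', hc, hd⟩ := exists_min_domset (pathAdd G u v 3)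
    have hcard : D'.card = domNum G := by rw [hc, heq]
    have h1 : Sum.inr 1 ∉ D' := by
      intro hh
      have hb := STbound G u v hne D' hd
      rw [Finset.card_erase_of_mem hh] at hb
      have hpos : 0 < D'.card := Finset.card_pos.mpr ⟨_, hh⟩
      omega
    set S : Finset V := Finset.univ.filter (fun w => Sum.inl w ∈ D') with hS
    have hmemS : ∀ w : V, w ∈ S ↔ Sum.inl w ∈ D' := fun w => by simp [hS]
    by_cases h0 : Sum.inr 0 ∈ D'
    · -- u side
      left
      have huS : Sum.inl u ∉ D' := by
        intro huD
        set D2 : Finset (V ⊕ Fin 3) := insert (Sum.inr 1) (D'.erase (Sum.inr 0)) with hD2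
        have hd2 : isDomSet (pathAdd G u v 3) D2 := by
          intro x hx
          match x with
          | Sum.inl a =>
            have haD : Sum.inl a ∉ D' := fun hh =>
              hx (Finset.mem_insert_of_mem (Finset.mem_erase.mpr ⟨by simp, hh⟩))
            obtain ⟨y, hy, hadj⟩ := hd _ haD
            match y with
            | Sum.inl b =>
              exact ⟨Sum.inl b, Finset.mem_insert_of_mem (Finset.mem_erase.mpr ⟨by simp, hy⟩), hadj⟩
            | Sum.inr i =>
              rcases (adj_rl G u v a i).mp hadj with ⟨rfl, hi⟩ | ⟨rfl, hi⟩
              · exact absurd (Finset.mem_insert_of_mem (Finset.mem_erase.mpr ⟨by simp, huD⟩)) hx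
              · have hi2 : i = 2 := Fin.ext (by simpa using hi)
                subst hi2
                exact ⟨Sum.inr 2, Finset.mem_insert_of_mem (Finset.mem_erase.mpr
                  ⟨fun hh => (by simpa using Sum.inr.inj hh), hy⟩), hadj⟩
          | Sum.inr i =>
            have hi1 : i ≠ 1 := fun hh => hx (by rw [hh]; exact Finset.mem_insert_self _ _)
            by_cases hi0 : i = 0
            · subst hi0
              exact ⟨Sum.inl u, Finset.mem_insert_of_mem (Finset.mem_erase.mpr ⟨by simp, huD⟩),
                (adj_lr G u v u 0).mpr (Or.inl ⟨rfl, rfl⟩)⟩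
            · have hi2 : i = 2 := by
                have h3 := i.isLt
                have e1 : (i : ℕ) ≠ 1 := fun hh => hi1 (Fin.ext hh)
                have e0 : (i : ℕ) ≠ 0 := fun hh => hi0 (Fin.ext hh)
                exact Fin.ext (by omega)
              subst hi2
              refine ⟨Sum.inr 1, Finset.mem_insert_self _ _, (adj_rr G u v 1 2).mpr
                ⟨fun hh => (by simpa using hh), Or.inl rfl⟩⟩
        have hb := STbound G u v hne D2 hd2
        have hsub : D2.erase (Sum.inr 1) ⊆ D'.erase (Sum.inr 0) := by
          intro x hx
          obtain ⟨hx1, hx2⟩ := Finset.mem_erase.mp hx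
          rcases Finset.mem_insert.mp hx2 with rfl | hx3
          · exact absurd rfl hx1
          · exact hx3
        have hle := Finset.card_le_card hsub
        rw [Finset.card_erase_of_mem h0] at hle
        have hpos : 0 < D'.card := Finset.card_pos.mpr ⟨_, h0⟩
        omega
      have hvcase : Sum.inl v ∈ D' ∨ Sum.inr 2 ∈ D' := by
        by_cases h2 : Sum.inr 2 ∈ D'
        · exact Or.inr h2
        · obtain ⟨y, hy, hadj⟩ := hd (Sum.inr 2) h2
          match y with
          | Sum.inl a =>
            rcases (adj_lr G u v a 2).mp hadj with ⟨rfl, hi⟩ | ⟨rfl, hi⟩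
            · exact absurd hi (by decide)
            · exact Or.inl hy
          | Sum.inr i =>
            obtain ⟨hij, hh⟩ := (adj_rr G u v i 2).mp hadj
            have h3 := i.isLt
            have c2 : ((2 : Fin 3) : ℕ) = 2 := rfl
            rw [c2] at hh
            have hi1 : i = 1 := Fin.ext (by omega)
            subst hi1
            exact absurd hy h1
      set E : Finset V := insert v S with hE
      have huE : u ∉ E := by
        intro hh
        rcases Finset.mem_insert.mp hh with hh1 | hh1
        · exact hne hh1
        · exact huS ((hmemS u).mp hh1)
      have hEdom : ∀ w, w ≠ u → w ∉ E → ∃ y ∈ E, y ≠ u ∧ G.Adj y w := by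
        intro w hwu hwE
        have hwS : w ∉ S := fun hh => hwE (Finset.mem_insert_of_mem hh)
        have hwD : Sum.inl w ∉ D' := fun hh => hwS ((hmemS w).mpr hh)
        rcases Ldom G u v hd w hwD with ⟨y, hy, hadj⟩ | ⟨rfl, _⟩ | ⟨rfl, _⟩
        · exact ⟨y, Finset.mem_insert_of_mem ((hmemS y).mpr hy),
            fun hh => huS (hh ▸ hy), hadj⟩
        · exact absurd rfl hwu
        · exact absurd (Finset.mem_insert_self _ _) hwE
      have hEcard : E.card ≤ (D'.erase (Sum.inr 0)).card := by
        apply Finset.card_le_card_of_injOn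
          (fun w => if Sum.inl w ∈ D' then Sum.inl w else Sum.inr 2)
        · intro w hw
          beta_reduce
          by_cases hwD : Sum.inl w ∈ D'
          · rw [if_pos hwD]; exact Finset.mem_erase.mpr ⟨by simp, hwD⟩
          · rw [if_neg hwD]
            have hwv : w = v := by
              rcases Finset.mem_insert.mp hw with rfl | hh
              · rfl
              · exact absurd ((hmemS w).mp hh) hwD
            subst hwv
            rcases hvcase with hh | hh
            · exact absurd hh hwD
            · exact Finset.mem_erase.mpr ⟨fun hh2 => (by simpa using Sum.inr.inj hh2), hh⟩
        · intro a ha b hb hab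
          simp only at hab
          by_cases haD : Sum.inl a ∈ D' <;> by_cases hbD : Sum.inl b ∈ D'
          · rw [if_pos haD, if_pos hbD] at hab; exact Sum.inl.inj hab
          · rw [if_pos haD, if_neg hbD] at hab; simp at hab
          · rw [if_neg haD, if_pos hbD] at hab; simp at hab
          · have hav : a = v := by
              rcases Finset.mem_insert.mp ha with rfl | hh
              · rfl
              · exact absurd ((hmemS a).mp hh) haD
            have hbv : b = v := by
              rcases Finset.mem_insert.mp hb with rfl | hh
              · rfl
              · exact absurd ((hmemS b).mp hh) hbD
            rw [hav, hbv]
      set D1 : Finset {w : V // w ∈ {w | w ≠ u}} :=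
        E.subtype (fun w => w ∈ {w : V | w ≠ u}) with hD1
      have hD1dom : isDomSet (G.induce {w | w ≠ u}) D1 := by
        rintro ⟨w, hw⟩ hmem
        have hwE : w ∉ E := fun hh => hmem (Finset.mem_subtype.mpr hh)
        obtain ⟨y, hyE, hyu, hadj⟩ := hEdom w hw hwE
        exact ⟨⟨y, hyu⟩, Finset.mem_subtype.mpr hyE, (induce_adj' G _ _ _).mpr hadj⟩
      have hD1card : D1.card = E.card := by
        rw [hD1, Finset.card_subtype]
        congr 1
        apply Finset.filter_true_of_mem
        intro x hx hxu
        exact huE (hxu ▸ hx)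
      have hle1 : domNum (G.induce {w | w ≠ u}) ≤ D1.card := domNum_le_card _ hD1dom
      have hW := domNum_le_del G u
      have herase : (D'.erase (Sum.inr 0)).card = D'.card - 1 := Finset.card_erase_of_mem h0
      have hpos : 0 < D'.card := Finset.card_pos.mpr ⟨_, h0⟩
      exact ⟨by omega, D1, hD1dom, by omega,
        Finset.mem_subtype.mpr (Finset.mem_insert_self _ _)⟩
    · -- v side
      right
      have h2 : Sum.inr 2 ∈ D' := by
        obtain ⟨y, hy, hadj⟩ := hd (Sum.inr 1) h1
        match y with
        | Sum.inl a =>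
          rcases (adj_lr G u v a 1).mp hadj with ⟨_, hi⟩ | ⟨_, hi⟩ <;>
            exact absurd hi (by decide)
        | Sum.inr i =>
          obtain ⟨hij, hh⟩ := (adj_rr G u v i 1).mp hadj
          have h3 := i.isLt
          have c1 : ((1 : Fin 3) : ℕ) = 1 := rfl
          rw [c1] at hh
          have : i = 0 ∨ i = 2 := by
            rcases hh with hh | hh
            · exact Or.inl (Fin.ext (by omega))
            · exact Or.inr (Fin.ext (by omega))
          rcases this with rfl | rfl
          · exact absurd hy h0
          · exact hy
      have hvS : Sum.inl v ∉ D' := by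
        intro hvD
        set D2 : Finset (V ⊕ Fin 3) := insert (Sum.inr 1) (D'.erase (Sum.inr 2)) with hD2
        have hd2 : isDomSet (pathAdd G u v 3) D2 := by
          intro x hx
          match x with
          | Sum.inl a =>
            have haD : Sum.inl a ∉ D' := fun hh =>
              hx (Finset.mem_insert_of_mem (Finset.mem_erase.mpr ⟨by simp, hh⟩))
            obtain ⟨y, hy, hadj⟩ := hd _ haD
            match y with
            | Sum.inl b =>
              exact ⟨Sum.inl b, Finset.mem_insert_of_mem (Finset.mem_erase.mpr ⟨by simp, hy⟩), hadj⟩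
            | Sum.inr i =>
              rcases (adj_rl G u v a i).mp hadj with ⟨rfl, hi⟩ | ⟨rfl, hi⟩
              · have hi0 : i = 0 := Fin.ext (by simpa using hi)
                subst hi0
                exact absurd hy h0
              · exact absurd (Finset.mem_insert_of_mem (Finset.mem_erase.mpr ⟨by simp, hvD⟩)) hx
          | Sum.inr i =>
            have hi1 : i ≠ 1 := fun hh => hx (by rw [hh]; exact Finset.mem_insert_self _ _)
            by_cases hi2 : i = 2
            · subst hi2
              exact ⟨Sum.inl v, Finset.mem_insert_of_mem (Finset.mem_erase.mpr ⟨by simp, hvD⟩),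
                (adj_lr G u v v 2).mpr (Or.inr ⟨rfl, rfl⟩)⟩
            · have hi0 : i = 0 := by
                have h3 := i.isLt
                have e1 : (i : ℕ) ≠ 1 := fun hh => hi1 (Fin.ext hh)
                have e2 : (i : ℕ) ≠ 2 := fun hh => hi2 (Fin.ext hh)
                exact Fin.ext (by omega)
              subst hi0
              refine ⟨Sum.inr 1, Finset.mem_insert_self _ _, (adj_rr G u v 1 0).mpr
                ⟨fun hh => (by simpa using hh), Or.inr rfl⟩⟩
        have hb := STbound G u v hne D2 hd2
        have hsub : D2.erase (Sum.inr 1) ⊆ D'.erase (Sum.inr 2) := by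
          intro x hx
          obtain ⟨hx1, hx2⟩ := Finset.mem_erase.mp hx
          rcases Finset.mem_insert.mp hx2 with rfl | hx3
          · exact absurd rfl hx1
          · exact hx3
        have hle := Finset.card_le_card hsub
        rw [Finset.card_erase_of_mem h2] at hle
        have hpos : 0 < D'.card := Finset.card_pos.mpr ⟨_, h2⟩
        omega
      have huD : Sum.inl u ∈ D' := by
        obtain ⟨y, hy, hadj⟩ := hd (Sum.inr 0) h0
        match y with
        | Sum.inl a =>
          rcases (adj_lr G u v a 0).mp hadj with ⟨rfl, hi⟩ | ⟨rfl, hi⟩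
          · exact hy
          · exact absurd hi (by decide)
        | Sum.inr i =>
          obtain ⟨hij, hh⟩ := (adj_rr G u v i 0).mp hadj
          have h3 := i.isLt
          have c0 : ((0 : Fin 3) : ℕ) = 0 := rfl
          rw [c0] at hh
          have hi1 : i = 1 := by
            rcases hh with hh | hh
            · omega
            · exact Fin.ext (by omega)
          subst hi1
          exact absurd hy h1
      set E : Finset V := insert u S with hE
      have hvE : v ∉ E := by
        intro hh
        rcases Finset.mem_insert.mp hh with hh1 | hh1
        · exact hne hh1.symm
        · exact hvS ((hmemS v).mp hh1)
      have hEdom : ∀ w, w ≠ v → w ∉ E → ∃ y ∈ E, y ≠ v ∧ G.Adj y w := by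
        intro w hwv hwE
        have hwS : w ∉ S := fun hh => hwE (Finset.mem_insert_of_mem hh)
        have hwD : Sum.inl w ∉ D' := fun hh => hwS ((hmemS w).mpr hh)
        rcases Ldom G u v hd w hwD with ⟨y, hy, hadj⟩ | ⟨rfl, _⟩ | ⟨rfl, _⟩
        · exact ⟨y, Finset.mem_insert_of_mem ((hmemS y).mpr hy),
            fun hh => hvS (hh ▸ hy), hadj⟩
        · exact absurd (Finset.mem_insert_self _ _) hwE
        · exact absurd rfl hwv
      have hEcard : E.card ≤ (D'.erase (Sum.inr 2)).card := by
        apply Finset.card_le_card_of_injOn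
          (fun w => if Sum.inl w ∈ D' then Sum.inl w else Sum.inr 0)
        · intro w hw
          beta_reduce
          by_cases hwD : Sum.inl w ∈ D'
          · rw [if_pos hwD]; exact Finset.mem_erase.mpr ⟨by simp, hwD⟩
          · have hwu : w = u := by
              rcases Finset.mem_insert.mp hw with rfl | hh
              · rfl
              · exact absurd ((hmemS w).mp hh) hwD
            subst hwu
            exact absurd huD hwD
        · intro a ha b hb hab
          simp only at hab
          by_cases haD : Sum.inl a ∈ D' <;> by_cases hbD : Sum.inl b ∈ D'
          · rw [if_pos haD, if_pos hbD] at hab; exact Sum.inl.inj hab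
          · rw [if_pos haD, if_neg hbD] at hab; simp at hab
          · rw [if_neg haD, if_pos hbD] at hab; simp at hab
          · have hau : a = u := by
              rcases Finset.mem_insert.mp ha with rfl | hh
              · rfl
              · exact absurd ((hmemS a).mp hh) haD
            have hbu : b = u := by
              rcases Finset.mem_insert.mp hb with rfl | hh
              · rfl
              · exact absurd ((hmemS b).mp hh) hbD
            rw [hau, hbu]
      set D1 : Finset {w : V // w ∈ {w | w ≠ v}} :=
        E.subtype (fun w => w ∈ {w : V | w ≠ v}) with hD1
      have hD1dom : isDomSet (G.induce {w | w ≠ v}) D1 := by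
        rintro ⟨w, hw⟩ hmem
        have hwE : w ∉ E := fun hh => hmem (Finset.mem_subtype.mpr hh)
        obtain ⟨y, hyE, hyv, hadj⟩ := hEdom w hw hwE
        exact ⟨⟨y, hyv⟩, Finset.mem_subtype.mpr hyE, (induce_adj' G _ _ _).mpr hadj⟩
      have hD1card : D1.card = E.card := by
        rw [hD1, Finset.card_subtype]
        congr 1
        apply Finset.filter_true_of_mem
        intro x hx hxv
        exact hvE (hxv ▸ hx)
      have hle1 : domNum (G.induce {w | w ≠ v}) ≤ D1.card := domNum_le_card _ hD1dom
      have hW := domNum_le_del G v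
      have herase : (D'.erase (Sum.inr 2)).card = D'.card - 1 := Finset.card_erase_of_mem h2
      have hpos : 0 < D'.card := Finset.card_pos.mpr ⟨_, h2⟩
      exact ⟨by omega, D1, hD1dom, by omega,
        Finset.mem_subtype.mpr (Finset.mem_insert_self _ _)⟩
  · -- backward
    rintro (⟨hlt, D, hDdom, hDcard, hvD⟩ | ⟨hlt, D, hDdom, hDcard, huD⟩)
    · refine le_antisymm ?_ parta
      have hdom : isDomSet (pathAdd G u v 3)
          (D.image (fun a => Sum.inl a.val) ∪ {Sum.inr 0}) := by
        intro x hx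
        match x with
        | Sum.inl a =>
          by_cases hau : a = u
          · exact ⟨Sum.inr 0, Finset.mem_union_right _ (by simp),
              (adj_rl G u v a 0).mpr (Or.inl ⟨hau, rfl⟩)⟩
          · have haD : (⟨a, hau⟩ : {w : V // w ∈ {w | w ≠ u}}) ∉ D := fun hh =>
              hx (Finset.mem_union_left _ (Finset.mem_image.mpr ⟨_, hh, rfl⟩))
            obtain ⟨y, hy, hadj⟩ := hDdom _ haD
            exact ⟨Sum.inl y.val, Finset.mem_union_left _ (Finset.mem_image.mpr ⟨y, hy, rfl⟩),
              (adj_ll G u v _ _).mpr ((induce_adj' G _ _ _).mp hadj)⟩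
        | Sum.inr i =>
          have hi0 : i ≠ 0 := fun hh => hx (Finset.mem_union_right _ (by simp [hh]))
          by_cases hi1 : i = 1
          · subst hi1
            exact ⟨Sum.inr 0, Finset.mem_union_right _ (by simp),
              (adj_rr G u v 0 1).mpr ⟨fun hh => (by simpa using hh), Or.inl rfl⟩⟩
          · have hi2 : i = 2 := by
              have h3 := i.isLt
              have e0 : (i : ℕ) ≠ 0 := fun hh => hi0 (Fin.ext hh)
              have e1 : (i : ℕ) ≠ 1 := fun hh => hi1 (Fin.ext hh)
              exact Fin.ext (by omega)
            subst hi2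
            exact ⟨Sum.inl v, Finset.mem_union_left _
              (Finset.mem_image.mpr ⟨⟨v, hne.symm⟩, hvD, rfl⟩),
              (adj_lr G u v v 2).mpr (Or.inr ⟨rfl, rfl⟩)⟩
      calc domNum (pathAdd G u v 3) ≤ _ := domNum_le_card _ hdom
        _ ≤ D.card + 1 := le_trans (Finset.card_union_le _ _) (by simpa using Finset.card_image_le)
        _ ≤ domNum G := by omega
    · refine le_antisymm ?_ parta
      have hdom : isDomSet (pathAdd G u v 3)
          (D.image (fun a => Sum.inl a.val) ∪ {Sum.inr 2}) := by
        intro x hx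
        match x with
        | Sum.inl a =>
          by_cases hav : a = v
          · exact ⟨Sum.inr 2, Finset.mem_union_right _ (by simp),
              (adj_rl G u v a 2).mpr (Or.inr ⟨hav, rfl⟩)⟩
          · have haD : (⟨a, hav⟩ : {w : V // w ∈ {w | w ≠ v}}) ∉ D := fun hh =>
              hx (Finset.mem_union_left _ (Finset.mem_image.mpr ⟨_, hh, rfl⟩))
            obtain ⟨y, hy, hadj⟩ := hDdom _ haD
            exact ⟨Sum.inl y.val, Finset.mem_union_left _ (Finset.mem_image.mpr ⟨y, hy, rfl⟩),
              (adj_ll G u v _ _).mpr ((induce_adj' G _ _ _).mp hadj)⟩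
        | Sum.inr i =>
          have hi2 : i ≠ 2 := fun hh => hx (Finset.mem_union_right _ (by simp [hh]))
          by_cases hi1 : i = 1
          · subst hi1
            exact ⟨Sum.inr 2, Finset.mem_union_right _ (by simp),
              (adj_rr G u v 2 1).mpr ⟨fun hh => (by simpa using hh), Or.inr rfl⟩⟩
          · have hi0 : i = 0 := by
              have h3 := i.isLt
              have e2 : (i : ℕ) ≠ 2 := fun hh => hi2 (Fin.ext hh)
              have e1 : (i : ℕ) ≠ 1 := fun hh => hi1 (Fin.ext hh)
              exact Fin.ext (by omega)
            subst hi0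
            exact ⟨Sum.inl u, Finset.mem_union_left _
              (Finset.mem_image.mpr ⟨⟨u, hne⟩, huD, rfl⟩),
              (adj_lr G u v u 0).mpr (Or.inl ⟨rfl, rfl⟩)⟩
      calc domNum (pathAdd G u v 3) ≤ _ := domNum_le_card _ hdom
        _ ≤ D.card + 1 := le_trans (Finset.card_union_le _ _) (by simpa using Finset.card_image_le)
        _ ≤ domNum G := by omega
end
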